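/- arXiv:0812.3921 — 4 statements merged into one kernel-verified Lean document; each statement's English description precedes it below -/
import Mathlib

section
/- Let C be a category with a zero object in which every morphism has a kernel and a cokernel. Consider a commutative square with morphisms f' : M → N, g' : M → P, g : N → Q, f : P → Q satisfying g∘f' = f∘g'. (a) If the square is a pullback square, g is a strict epimorphism and g' is an epimorphism, then the square is also a pushout square. (b) Dually, if the square is a pushout square, f' is a strict monomorphism and f is a monomorphism, then the square is also a pullback square. -/
open CategoryTheory CategoryTheory.Limits

universe v u

namespace SlopeFiltrations

variable {C : Type u} [Category.{v} C] [HasZeroMorphisms C]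

/-- A morphism is a *strict monomorphism* if it is a kernel of some morphism. -/
def IsStrictMono {M N : C} (f : M ⟶ N) : Prop :=
  ∃ (Z : C) (g : N ⟶ Z) (w : f ≫ g = 0), Nonempty (IsLimit (KernelFork.ofι f w))

/-- A morphism is a *strict epimorphism* if it is a cokernel of some morphism. -/
def IsStrictEpi {M N : C} (f : M ⟶ N) : Prop :=
  ∃ (Z : C) (g : Z ⟶ M) (w : g ≫ f = 0), Nonempty (IsColimit (CokernelCofork.ofπ f w))

/-- In a category with a zero object, kernels and cokernels, consider a commutative square
`f' : M ⟶ N`, `g' : M ⟶ P`, `g : N ⟶ Q`, `f : P ⟶ Q` with `f' ≫ g = g' ≫ f`.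
(a) Any pullback square in which `g` is a strict epimorphism and `g'` is an epimorphism is
also a pushout square. (b) Dually, any pushout square in which `f'` is a strict monomorphism
and `f` is a monomorphism is also a pullback square. -/
theorem isPushout_of_isPullback_and_isPullback_of_isPushout
    [HasZeroObject C] [HasKernels C] [HasCokernels C]
    {M N P Q : C} (f' : M ⟶ N) (g' : M ⟶ P) (g : N ⟶ Q) (f : P ⟶ Q)
    (hcomm : f' ≫ g = g' ≫ f) :
    (IsPullback f' g' g f → IsStrictEpi g → Epi g' → IsPushout f' g' g f) ∧
    (IsPushout f' g' g f → IsStrictMono f' → Mono f → IsPullback f' g' g f) := by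
  constructor
  · -- part (a)
    rintro hp ⟨Z, u, w, ⟨hc⟩⟩ hge
    -- `g` is epi since it is a cokernel
    have hg : Epi g := by
      constructor
      intro T a b hab
      exact Cofork.IsColimit.hom_ext hc (by simpa using hab)
    -- the morphism from the kernel of `g` to `M`
    have hzero : kernel.ι g ≫ g = (0 : kernel g ⟶ P) ≫ f := by simp
    set e : kernel g ⟶ M := hp.lift (kernel.ι g) 0 hzero with he
    have he1 : e ≫ f' = kernel.ι g := hp.lift_fst _ _ _
    have he2 : e ≫ g' = 0 := hp.lift_snd _ _ _
    -- `u` factors through the kernel of `g`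
    have hu : kernel.lift g u w ≫ kernel.ι g = u := kernel.lift_ι _ _ _
    have key : ∀ (s : PushoutCocone f' g'), u ≫ s.inl = 0 := by
      intro s
      have hk : kernel.ι g ≫ s.inl = 0 := by
        rw [← he1, Category.assoc, s.condition, ← Category.assoc, he2, zero_comp]
      rw [← hu, Category.assoc, hk, comp_zero]
    refine IsPushout.of_isColimit (PushoutCocone.IsColimit.mk hcomm
      (fun s => (CokernelCofork.IsColimit.desc' hc s.inl (key s)).1)
      (fun s => (CokernelCofork.IsColimit.desc' hc s.inl (key s)).2)
      (fun s => ?_) (fun s m h1 h2 => ?_))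
    · -- second factorization, using that g' is epi
      have h1 : g ≫ (CokernelCofork.IsColimit.desc' hc s.inl (key s)).1 = s.inl :=
        (CokernelCofork.IsColimit.desc' hc s.inl (key s)).2
      have : g' ≫ f ≫ (CokernelCofork.IsColimit.desc' hc s.inl (key s)).1 = g' ≫ s.inr := by
        rw [← Category.assoc, ← hcomm, Category.assoc, h1, s.condition]
      exact (cancel_epi g').1 this
    · -- uniqueness, using that g is epi
      have h1' : g ≫ (CokernelCofork.IsColimit.desc' hc s.inl (key s)).1 = s.inl :=
        (CokernelCofork.IsColimit.desc' hc s.inl (key s)).2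
      apply (cancel_epi g).1
      rw [h1, h1']
  · -- part (b)
    rintro hp ⟨Z, u, w, ⟨hl⟩⟩ hf
    -- `f'` is mono since it is a kernel
    have hf' : Mono f' := by
      constructor
      intro T a b hab
      exact Fork.IsLimit.hom_ext hl (by simpa using hab)
    -- the morphism from `Q` to the cokernel of `f'`
    have hzero : f' ≫ cokernel.π f' = g' ≫ (0 : P ⟶ cokernel f') := by simp
    set e : Q ⟶ cokernel f' := hp.desc (cokernel.π f') 0 hzero with he
    have he1 : g ≫ e = cokernel.π f' := hp.inl_desc _ _ _
    have he2 : f ≫ e = 0 := hp.inr_desc _ _ _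
    -- `u` factors through the cokernel of `f'`
    have hu : cokernel.π f' ≫ cokernel.desc f' u w = u := cokernel.π_desc _ _ _
    have key : ∀ (s : PullbackCone g f), s.fst ≫ u = 0 := by
      intro s
      have hk : s.fst ≫ cokernel.π f' = 0 := by
        rw [← he1, ← Category.assoc, s.condition, Category.assoc, he2, comp_zero]
      rw [← hu, ← Category.assoc, hk, zero_comp]
    refine IsPullback.of_isLimit (PullbackCone.IsLimit.mk hcomm
      (fun s => (KernelFork.IsLimit.lift' hl s.fst (key s)).1)
      (fun s => (KernelFork.IsLimit.lift' hl s.fst (key s)).2)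
      (fun s => ?_) (fun s m h1 h2 => ?_))
    · -- second factorization, using that f is mono
      have h1 : (KernelFork.IsLimit.lift' hl s.fst (key s)).1 ≫ f' = s.fst :=
        (KernelFork.IsLimit.lift' hl s.fst (key s)).2
      have : ((KernelFork.IsLimit.lift' hl s.fst (key s)).1 ≫ g') ≫ f = s.snd ≫ f := by
        rw [Category.assoc, ← hcomm, ← Category.assoc, h1, s.condition]
      exact (cancel_mono f).1 this
    · -- uniqueness, using that f' is mono
      have h1' : (KernelFork.IsLimit.lift' hl s.fst (key s)).1 ≫ f' = s.fst :=
        (KernelFork.IsLimit.lift' hl s.fst (key s)).2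
      apply (cancel_mono f').1
      rw [h1, h1']

end SlopeFiltrations
end

section
/- Let C be a quasi-abelian category. Consider a commutative square with morphisms f' : M → N, g' : M → P, g : N → Q, f : P → Q satisfying g∘f' = f∘g'. If the square is a pullback square in which f is a strict monomorphism and g is a strict epimorphism, then the square is also a pushout square in which g' is a strict epimorphism and f' is a strict monomorphism; conversely, if the square is a pushout square in which f' is a strict monomorphism and g' is a strict epimorphism, then it is also a pullback square in which f is a strict monomorphism and g is a strict epimorphism. Moreover, in this situation the induced morphism Ker g' → Ker g is an isomorphism. -/
open CategoryTheory CategoryTheory.Limits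

universe v u

namespace SlopeFiltrations

variable {C : Type u} [Category.{v} C]

section ZeroMorphisms

variable [HasZeroMorphisms C]

/-- `0 ⟶ M ⟶ N ⟶ P ⟶ 0` is a short exact sequence: `f` is a kernel of `g` and `g` is a
cokernel of `f`. -/
def IsShortExactSeq {M N P : C} (f : M ⟶ N) (g : N ⟶ P) : Prop :=
  ∃ w : f ≫ g = 0,
    Nonempty (IsLimit (KernelFork.ofι f w)) ∧ Nonempty (IsColimit (CokernelCofork.ofπ g w))

end ZeroMorphisms

/-- A *quasi-abelian category* is an additive category with kernels and cokernels in which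
every pullback of a strict epimorphism is a strict epimorphism and every pushout of a strict
monomorphism is a strict monomorphism. -/
class IsQuasiAbelian (C : Type u) [Category.{v} C] [Preadditive C]
    [HasKernels C] [HasCokernels C] : Prop where
  strictEpi_of_pullback : ∀ {P X Y Z : C} {fst : P ⟶ X} {snd : P ⟶ Y} {f : X ⟶ Z} {g : Y ⟶ Z},
    IsPullback fst snd f g → IsStrictEpi f → IsStrictEpi snd
  strictMono_of_pushout : ∀ {P X Y Z : C} {f : P ⟶ X} {g : P ⟶ Y} {inl : X ⟶ Z} {inr : Y ⟶ Z},
    IsPushout f g inl inr → IsStrictMono f → IsStrictMono inr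

section Aux

variable [HasZeroMorphisms C]

theorem IsStrictMono.mono {M N : C} {f : M ⟶ N} (hf : IsStrictMono f) : Mono f := by
  obtain ⟨Z, g, w, ⟨hl⟩⟩ := hf
  simpa using mono_of_isLimit_fork hl

theorem IsStrictEpi.epi {M N : C} {f : M ⟶ N} (hf : IsStrictEpi f) : Epi f := by
  obtain ⟨Z, g, w, ⟨hc⟩⟩ := hf
  simpa using epi_of_isColimit_cofork hc

/-- The pullback of a strict monomorphism is a strict monomorphism. -/
theorem isStrictMono_of_isPullback {M N P Q : C} {f' : M ⟶ N} {g' : M ⟶ P} {g : N ⟶ Q}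
    {f : P ⟶ Q} (hp : IsPullback f' g' g f) (hf : IsStrictMono f) : IsStrictMono f' := by
  have hfm : Mono f := hf.mono
  obtain ⟨Z, h, w, ⟨hl⟩⟩ := hf
  have hf'm : Mono f' := ⟨fun {T} a b hab => hp.hom_ext hab (by
    rw [← cancel_mono f, Category.assoc, Category.assoc, ← hp.w, ← Category.assoc, hab,
      Category.assoc])⟩
  refine ⟨Z, g ≫ h, by rw [← Category.assoc, hp.w, Category.assoc, w, comp_zero], ⟨?_⟩⟩
  refine KernelFork.IsLimit.ofι' _ _ (fun {A} k hk => ?_)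
  have hk' : (k ≫ g) ≫ h = 0 := by rw [Category.assoc]; exact hk
  obtain ⟨l, hl2⟩ := KernelFork.IsLimit.lift' hl (k ≫ g) hk'
  refine ⟨hp.lift k l ?_, hp.lift_fst _ _ _⟩
  simpa using hl2.symm

/-- The pushout of a strict epimorphism is a strict epimorphism. -/
theorem isStrictEpi_of_isPushout {M N P Q : C} {f' : M ⟶ N} {g' : M ⟶ P} {g : N ⟶ Q}
    {f : P ⟶ Q} (hp : IsPushout f' g' g f) (hg' : IsStrictEpi g') : IsStrictEpi g := by
  have hg'e : Epi g' := hg'.epi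
  obtain ⟨Z, u, w, ⟨hc⟩⟩ := hg'
  have hge : Epi g := ⟨fun {T} a b hab => hp.hom_ext hab (by
    rw [← cancel_epi g', ← Category.assoc, ← hp.w, Category.assoc, hab, ← Category.assoc,
      hp.w, Category.assoc])⟩
  refine ⟨Z, u ≫ f', by rw [Category.assoc, hp.w, ← Category.assoc, w, zero_comp], ⟨?_⟩⟩
  refine CokernelCofork.IsColimit.ofπ' _ _ (fun {A} k hk => ?_)
  have hk' : u ≫ f' ≫ k = 0 := by rw [← Category.assoc]; exact hk
  obtain ⟨t, ht⟩ := CokernelCofork.IsColimit.desc' hc (f' ≫ k) hk'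
  refine ⟨hp.desc k t ?_, hp.inl_desc _ _ _⟩
  simpa using ht.symm

end Aux

/-- A pullback square in which the second leg is a strict epimorphism is also a pushout
square. -/
theorem isPushout_of_isPullback [Preadditive C] [HasKernels C] [HasCokernels C]
    [IsQuasiAbelian C] {M N P Q : C} {f' : M ⟶ N} {g' : M ⟶ P} {g : N ⟶ Q} {f : P ⟶ Q}
    (hp : IsPullback f' g' g f) (hg : IsStrictEpi g) : IsPushout f' g' g f := by
  have hg'e : Epi g' := (IsQuasiAbelian.strictEpi_of_pullback hp hg).epi
  have hge : Epi g := hg.epi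
  obtain ⟨Z, u, wu, ⟨hc⟩⟩ := hg
  have hu0 : u ≫ g = (0 : Z ⟶ P) ≫ f := by rw [wu, zero_comp]
  have hu'f : hp.lift u 0 hu0 ≫ f' = u := hp.lift_fst _ _ _
  have hu'g : hp.lift u 0 hu0 ≫ g' = 0 := hp.lift_snd _ _ _
  have key : ∀ (s : PushoutCocone f' g'), u ≫ s.inl = 0 := fun s => by
    rw [← hu'f, Category.assoc, s.condition, ← Category.assoc, hu'g, zero_comp]
  refine IsPushout.of_isColimit' (CommSq.mk hp.w) ?_
  refine PushoutCocone.IsColimit.mk _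
    (fun s => (CokernelCofork.IsColimit.desc' hc s.inl (key s)).1) (fun s => ?_) (fun s => ?_)
    (fun s m hml hmr => ?_)
  · simpa using (CokernelCofork.IsColimit.desc' hc s.inl (key s)).2
  · have fac : g ≫ (CokernelCofork.IsColimit.desc' hc s.inl (key s)).1 = s.inl := by
      simpa using (CokernelCofork.IsColimit.desc' hc s.inl (key s)).2
    rw [← cancel_epi g', ← Category.assoc, ← hp.w, Category.assoc, fac, s.condition]
  · rw [← cancel_epi g]
    have fac : g ≫ (CokernelCofork.IsColimit.desc' hc s.inl (key s)).1 = s.inl := by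
      simpa using (CokernelCofork.IsColimit.desc' hc s.inl (key s)).2
    rw [fac]; exact hml
/-- A pushout square in which the first leg is a strict monomorphism is also a pullback
square. -/
theorem isPullback_of_isPushout [Preadditive C] [HasKernels C] [HasCokernels C]
    [IsQuasiAbelian C] {M N P Q : C} {f' : M ⟶ N} {g' : M ⟶ P} {g : N ⟶ Q} {f : P ⟶ Q}
    (hp : IsPushout f' g' g f) (hf' : IsStrictMono f') : IsPullback f' g' g f := by
  have hfm : Mono f := (IsQuasiAbelian.strictMono_of_pushout hp hf').mono
  have hf'm : Mono f' := hf'.mono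
  obtain ⟨Z, v, wv, ⟨hl⟩⟩ := hf'
  have hv0 : f' ≫ v = g' ≫ (0 : P ⟶ Z) := by rw [wv, comp_zero]
  have hgv : g ≫ hp.desc v 0 hv0 = v := hp.inl_desc _ _ _
  have hfv : f ≫ hp.desc v 0 hv0 = 0 := hp.inr_desc _ _ _
  have key : ∀ (s : PullbackCone g f), s.fst ≫ v = 0 := fun s => by
    rw [← hgv, ← Category.assoc, s.condition, Category.assoc, hfv, comp_zero]
  refine IsPullback.of_isLimit' (CommSq.mk hp.w) ?_
  refine PullbackCone.IsLimit.mk _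
    (fun s => (KernelFork.IsLimit.lift' hl s.fst (key s)).1) (fun s => ?_) (fun s => ?_)
    (fun s m hml hmr => ?_)
  · simpa using (KernelFork.IsLimit.lift' hl s.fst (key s)).2
  · have fac : (KernelFork.IsLimit.lift' hl s.fst (key s)).1 ≫ f' = s.fst := by
      simpa using (KernelFork.IsLimit.lift' hl s.fst (key s)).2
    rw [← cancel_mono f, Category.assoc, ← hp.w, ← Category.assoc, fac, s.condition]
  · rw [← cancel_mono f']
    have fac : (KernelFork.IsLimit.lift' hl s.fst (key s)).1 ≫ f' = s.fst := by
      simpa using (KernelFork.IsLimit.lift' hl s.fst (key s)).2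
    rw [fac]; exact hml

/-- In a quasi-abelian category, for a commutative square `f' : M ⟶ N`, `g' : M ⟶ P`,
`g : N ⟶ Q`, `f : P ⟶ Q` with `f' ≫ g = g' ≫ f`: a pullback square in which `f` is a strict
monomorphism and `g` is a strict epimorphism is also a pushout square in which `g'` is a
strict epimorphism and `f'` is a strict monomorphism, and conversely; moreover the induced
morphism `Ker g' ⟶ Ker g` is an isomorphism. -/
theorem pullback_pushout_square_quasiAbelian
    [Preadditive C] [HasFiniteBiproducts C] [HasKernels C] [HasCokernels C] [IsQuasiAbelian C]
    {M N P Q : C} (f' : M ⟶ N) (g' : M ⟶ P) (g : N ⟶ Q) (f : P ⟶ Q)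
    (hcomm : f' ≫ g = g' ≫ f) :
    (IsPullback f' g' g f → IsStrictMono f → IsStrictEpi g →
      IsPushout f' g' g f ∧ IsStrictEpi g' ∧ IsStrictMono f') ∧
    (IsPushout f' g' g f → IsStrictMono f' → IsStrictEpi g' →
      IsPullback f' g' g f ∧ IsStrictMono f ∧ IsStrictEpi g) ∧
    (IsPullback f' g' g f → IsStrictMono f → IsStrictEpi g →
      ∀ h : (kernel.ι g' ≫ f') ≫ g = 0,
        IsIso (kernel.lift g (kernel.ι g' ≫ f') h)) := by
  refine ⟨fun hp hf hg => ⟨isPushout_of_isPullback hp hg,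
      IsQuasiAbelian.strictEpi_of_pullback hp hg, isStrictMono_of_isPullback hp hf⟩,
    fun hp hf' hg' => ⟨isPullback_of_isPushout hp hf',
      IsQuasiAbelian.strictMono_of_pushout hp hf', isStrictEpi_of_isPushout hp hg'⟩,
    fun hp _ _ h => ?_⟩
  -- the inverse of `kernel.lift g (kernel.ι g' ≫ f') h`
  have hw : kernel.ι g ≫ g = (0 : kernel g ⟶ P) ≫ f := by simp
  set k' : kernel g ⟶ M := hp.lift (kernel.ι g) 0 hw with hk'
  have hk'f : k' ≫ f' = kernel.ι g := hp.lift_fst _ _ _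
  have hk'g : k' ≫ g' = 0 := hp.lift_snd _ _ _
  refine ⟨kernel.lift g' k' hk'g, ?_, ?_⟩
  · -- lift ≫ inverse = id
    have h1 : (kernel.lift g (kernel.ι g' ≫ f') h ≫ kernel.lift g' k' hk'g) ≫ kernel.ι g'
        = kernel.ι g' := by
      rw [Category.assoc, kernel.lift_ι]
      apply hp.hom_ext
      · rw [Category.assoc, hk'f, kernel.lift_ι]
      · rw [Category.assoc, hk'g, comp_zero, kernel.condition]
    rw [← cancel_mono (kernel.ι g'), h1, Category.id_comp]
  · -- inverse ≫ lift = id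
    have h2 : (kernel.lift g' k' hk'g ≫ kernel.lift g (kernel.ι g' ≫ f') h) ≫ kernel.ι g
        = kernel.ι g := by
      rw [Category.assoc, kernel.lift_ι, ← Category.assoc, kernel.lift_ι, hk'f]
    rw [← cancel_mono (kernel.ι g), h2, Category.id_comp]

end SlopeFiltrations
end

section
/- Let C be an essentially small quasi-abelian category with a rank function rk and a slope function μ, let λ ∈ ℚ, and let 0 → M → N → P → 0 be a short exact sequence in C. If two of the three objects M, N, P are semistable of slope λ, then so is the third, unless it is zero. -/
open CategoryTheory CategoryTheory.Limits

universe v u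

namespace SlopeFiltrations

variable {C : Type u} [Category.{v} C]

/-- A *rank function*: a map to `ℕ`, additive on short exact sequences, vanishing exactly on
zero objects. -/
structure RankFunction (C : Type u) [Category.{v} C] [HasZeroMorphisms C] where
  rk : C → ℕ
  rk_zero_iff : ∀ X : C, rk X = 0 ↔ IsZero X
  additive : ∀ {M N P : C} (f : M ⟶ N) (g : N ⟶ P), IsShortExactSeq f g →
    rk N = rk M + rk P

/-- A *slope function* relative to a rank function: `μ M ≤ μ N` for epi-monic `M ⟶ N`, and
the degree `deg = μ · rk` is additive on short exact sequences. -/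
structure SlopeFunction (C : Type u) [Category.{v} C] [HasZeroMorphisms C]
    (R : RankFunction C) where
  μ : C → ℚ
  le_of_mono_epi : ∀ {M N : C} (f : M ⟶ N), Mono f → Epi f →
    ¬ IsZero M → ¬ IsZero N → μ M ≤ μ N
  deg_additive : ∀ {M N P : C} (f : M ⟶ N) (g : N ⟶ P), IsShortExactSeq f g →
    μ N * (R.rk N : ℚ) = μ M * (R.rk M : ℚ) + μ P * (R.rk P : ℚ)

variable {C : Type u} [Category.{v} C]

/-- A nonzero object `N` is *semistable* (for the slope function `μ`) if `μ M ≤ μ N` for every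
nonzero subobject `M` of `N`. -/
def Semistable [HasZeroMorphisms C] (μ : C → ℚ) (N : C) : Prop :=
  ¬ IsZero N ∧ ∀ ⦃M : C⦄ (m : M ⟶ N), Mono m → ¬ IsZero M → μ M ≤ μ N

/-- Semistable of slope `lam`. -/
def SemistableOfSlope [HasZeroMorphisms C] (μ : C → ℚ) (lam : ℚ) (N : C) : Prop :=
  Semistable μ N ∧ μ N = lam

/-- A nonzero object `N` is *stable* if `μ M < μ N` for every nonzero subobject `M` of `N`
whose inclusion is not an isomorphism. -/
def Stable [HasZeroMorphisms C] (μ : C → ℚ) (N : C) : Prop :=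
  ¬ IsZero N ∧ ∀ ⦃M : C⦄ (m : M ⟶ N), Mono m → ¬ IsZero M → ¬ IsIso m → μ M < μ N


section Aux

variable [HasZeroMorphisms C]

lemma epi_of_isStrictEpi {E Q : C} {h : E ⟶ Q} (hh : IsStrictEpi h) : Epi h := by
  obtain ⟨Z, g0, w0, ⟨hc⟩⟩ := hh
  exact epi_of_isColimit_cofork hc

lemma mono_of_isStrictMono {K E : C} {k : K ⟶ E} (hk : IsStrictMono k) : Mono k := by
  obtain ⟨Z, g0, w0, ⟨hl⟩⟩ := hk
  exact mono_of_isLimit_fork hl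

/-- If `h` is a strict epimorphism and `ι` is a kernel of `h`, then `0 → K → E → Q → 0`
is a short exact sequence. -/
lemma ses_of_strictEpi_of_isKernel {K E Q : C} {h : E ⟶ Q} (hh : IsStrictEpi h)
    {ι : K ⟶ E} (w : ι ≫ h = 0) (hι : IsLimit (KernelFork.ofι ι w)) :
    IsShortExactSeq ι h := by
  refine ⟨w, ⟨hι⟩, ?_⟩
  have hepi : Epi h := epi_of_isStrictEpi hh
  obtain ⟨Z, g0, w0, ⟨hc⟩⟩ := hh
  refine ⟨CokernelCofork.IsColimit.ofπ' h w (fun {A} t ht => ?_)⟩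
  obtain ⟨v, hv⟩ := KernelFork.IsLimit.lift' hι g0 w0
  simp only [Fork.ι_ofι] at hv
  have h0 : g0 ≫ t = 0 := by rw [← hv, Category.assoc, ht, comp_zero]
  obtain ⟨d, hd⟩ := CokernelCofork.IsColimit.desc' hc t h0
  exact ⟨d, hd⟩

/-- If `k` is a strict monomorphism and `π` is a cokernel of `k`, then `0 → K → Q → Q' → 0`
is a short exact sequence. -/
lemma ses_of_strictMono_of_isCokernel {K Q Q' : C} {k : K ⟶ Q} (hk : IsStrictMono k)
    {π : Q ⟶ Q'} (w : k ≫ π = 0) (hπ : IsColimit (CokernelCofork.ofπ π w)) :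
    IsShortExactSeq k π := by
  refine ⟨w, ?_, ⟨hπ⟩⟩
  have hmono : Mono k := mono_of_isStrictMono hk
  obtain ⟨Z, h', w', ⟨hl⟩⟩ := hk
  refine ⟨KernelFork.IsLimit.ofι' k w (fun {A} t ht => ?_)⟩
  obtain ⟨v, hv⟩ := CokernelCofork.IsColimit.desc' hπ h' w'
  simp only [Cofork.π_ofπ] at hv
  have h0 : t ≫ h' = 0 := by rw [← hv, ← Category.assoc, ht, zero_comp]
  obtain ⟨l, hl2⟩ := KernelFork.IsLimit.lift' hl t h0
  exact ⟨l, hl2⟩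

end Aux

/-- For a short exact sequence `0 → M → N → P → 0`, if two of the three objects are
semistable of slope `lam`, then so is the third, unless it is zero. -/
theorem two_of_three_semistable
    [Preadditive C] [HasFiniteBiproducts C] [HasKernels C] [HasCokernels C]
    [IsQuasiAbelian C] [EssentiallySmall.{v} C]
    (R : RankFunction C) (S : SlopeFunction C R) (lam : ℚ)
    {M N P : C} (f : M ⟶ N) (g : N ⟶ P) (hse : IsShortExactSeq f g) :
    (SemistableOfSlope S.μ lam M → SemistableOfSlope S.μ lam N →
      IsZero P ∨ SemistableOfSlope S.μ lam P) ∧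
    (SemistableOfSlope S.μ lam M → SemistableOfSlope S.μ lam P →
      IsZero N ∨ SemistableOfSlope S.μ lam N) ∧
    (SemistableOfSlope S.μ lam N → SemistableOfSlope S.μ lam P →
      IsZero M ∨ SemistableOfSlope S.μ lam M) := by
  obtain ⟨w, ⟨hker⟩, ⟨hcoker⟩⟩ := hse
  have hse' : IsShortExactSeq f g := ⟨w, ⟨hker⟩, ⟨hcoker⟩⟩
  haveI : HasBinaryBiproducts C := hasBinaryBiproducts_of_finite_biproducts C
  haveI : HasEqualizers C := Preadditive.hasEqualizers_of_hasKernels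
  haveI : HasPullbacks C := hasPullbacks_of_hasBinaryProducts_of_hasEqualizers C
  have hgse : IsStrictEpi g := ⟨M, f, w, ⟨hcoker⟩⟩
  have hmonof : Mono f := mono_of_isLimit_fork hker
  have hrk : (R.rk N : ℚ) = (R.rk M : ℚ) + (R.rk P : ℚ) := by
    exact_mod_cast congrArg (Nat.cast : ℕ → ℚ) (R.additive f g hse')
  have hdeg := S.deg_additive f g hse'
  have rkpos : ∀ X : C, ¬ IsZero X → 0 < (R.rk X : ℚ) := by
    intro X hX
    exact_mod_cast Nat.pos_of_ne_zero (fun h0 => hX ((R.rk_zero_iff X).mp h0))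
  have rkzero : ∀ X : C, IsZero X → (R.rk X : ℚ) = 0 := by
    intro X hX
    exact_mod_cast (R.rk_zero_iff X).mpr hX
  have degle : ∀ X : C, (¬ IsZero X → S.μ X ≤ lam) →
      S.μ X * (R.rk X : ℚ) ≤ lam * (R.rk X : ℚ) := by
    intro X hX
    by_cases h0 : IsZero X
    · rw [rkzero X h0]; simp
    · exact mul_le_mul_of_nonneg_right (hX h0) (Nat.cast_nonneg _)
  refine ⟨?_, ?_, ?_⟩
  -- Case 1 : M and N semistable of slope lam
  · rintro ⟨⟨hM0, hMsub⟩, hMs⟩ ⟨⟨hN0, hNsub⟩, hNs⟩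
    by_cases hP0 : IsZero P
    · exact Or.inl hP0
    right
    have hrkP := rkpos P hP0
    have hμP : S.μ P = lam := by
      rw [hNs, hMs, hrk] at hdeg
      exact mul_right_cancel₀ hrkP.ne' (by linear_combination -hdeg)
    refine ⟨⟨hP0, fun Q m hm hQ0 => ?_⟩, hμP⟩
    haveI := hm
    have hw0 : f ≫ g = 0 ≫ m := by rw [w, zero_comp]
    have hιfst : pullback.lift f 0 hw0 ≫ pullback.fst g m = f := pullback.lift_fst _ _ _
    have hιsnd : pullback.lift f 0 hw0 ≫ pullback.snd g m = 0 := pullback.lift_snd _ _ _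
    haveI : Mono (pullback.lift f 0 hw0) := mono_of_mono_fac hιfst
    have hkerE : IsLimit (KernelFork.ofι (pullback.lift f 0 hw0) hιsnd) := by
      refine KernelFork.IsLimit.ofι' _ hιsnd (fun {A} t ht => ?_)
      have h1 : (t ≫ pullback.fst g m) ≫ g = 0 := by
        rw [Category.assoc, pullback.condition, ← Category.assoc, ht, zero_comp]
      obtain ⟨u, hu⟩ := KernelFork.IsLimit.lift' hker (t ≫ pullback.fst g m) h1
      simp only [Fork.ι_ofι] at hu
      refine ⟨u, ?_⟩
      apply pullback.hom_ext
      · rw [Category.assoc, hιfst, hu]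
      · rw [Category.assoc, hιsnd, comp_zero, ht]
    have hsnd : IsStrictEpi (pullback.snd g m) :=
      IsQuasiAbelian.strictEpi_of_pullback (IsPullback.of_hasPullback g m) hgse
    have hsesE : IsShortExactSeq (pullback.lift f 0 hw0) (pullback.snd g m) :=
      ses_of_strictEpi_of_isKernel hsnd hιsnd hkerE
    have hrkE : (R.rk (pullback g m) : ℚ) = (R.rk M : ℚ) + (R.rk Q : ℚ) := by
      exact_mod_cast congrArg (Nat.cast : ℕ → ℚ) (R.additive _ _ hsesE)
    have hdegE := S.deg_additive _ _ hsesE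
    have hrkQ := rkpos Q hQ0
    have hE0 : ¬ IsZero (pullback g m) := by
      intro hz
      have h2 := rkzero _ hz
      have h3 : (0:ℚ) ≤ (R.rk M : ℚ) := Nat.cast_nonneg _
      rw [h2] at hrkE
      linarith
    have hμE : S.μ (pullback g m) ≤ lam := by
      rw [← hNs]
      exact hNsub (pullback.fst g m) inferInstance hE0
    have h2 : S.μ (pullback g m) * (R.rk (pullback g m) : ℚ) ≤ lam * (R.rk (pullback g m) : ℚ) :=
      mul_le_mul_of_nonneg_right hμE (Nat.cast_nonneg _)
    have h3 : lam * (R.rk (pullback g m) : ℚ) = lam * (R.rk M : ℚ) + lam * (R.rk Q : ℚ) := by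
      rw [hrkE]; ring
    rw [hMs] at hdegE
    have key : S.μ Q * (R.rk Q : ℚ) ≤ lam * (R.rk Q : ℚ) := by linarith
    rw [hμP]
    exact le_of_mul_le_mul_right key hrkQ
  -- Case 2 : M and P semistable of slope lam
  · rintro ⟨⟨hM0, hMsub⟩, hMs⟩ ⟨⟨hP0, hPsub⟩, hPs⟩
    right
    have hrkM := rkpos M hM0
    have hrkP := rkpos P hP0
    have hN0 : ¬ IsZero N := by
      intro hz
      have h2 := rkzero _ hz
      rw [h2] at hrk
      linarith
    have hrkN := rkpos N hN0
    have hμN : S.μ N = lam := by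
      rw [hMs, hPs, hrk] at hdeg
      exact mul_right_cancel₀ hrkN.ne' (by rw [hrk]; linear_combination hdeg)
    refine ⟨⟨hN0, fun Q m' hm' hQ0 => ?_⟩, hμN⟩
    haveI := hm'
    have hkStrict : IsStrictMono (kernel.ι (m' ≫ g)) :=
      ⟨P, m' ≫ g, kernel.condition _, ⟨kernelIsKernel _⟩⟩
    have hsesQ : IsShortExactSeq (kernel.ι (m' ≫ g)) (cokernel.π (kernel.ι (m' ≫ g))) :=
      ses_of_strictMono_of_isCokernel hkStrict (cokernel.condition _) (cokernelIsCokernel _)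
    have hπq : cokernel.π (kernel.ι (m' ≫ g)) ≫ cokernel.desc _ (m' ≫ g) (kernel.condition _)
        = m' ≫ g := cokernel.π_desc _ _ _
    have hπse : IsStrictEpi (cokernel.π (kernel.ι (m' ≫ g))) :=
      ⟨kernel (m' ≫ g), kernel.ι (m' ≫ g), cokernel.condition _, ⟨cokernelIsCokernel _⟩⟩
    have hmq : Mono (cokernel.desc (kernel.ι (m' ≫ g)) (m' ≫ g) (kernel.condition _)) := by
      apply Preadditive.mono_of_cancel_zero
      intro T t ht
      have hsnd : IsStrictEpi (pullback.snd (cokernel.π (kernel.ι (m' ≫ g))) t) :=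
        IsQuasiAbelian.strictEpi_of_pullback (IsPullback.of_hasPullback _ t) hπse
      have h1 : pullback.fst (cokernel.π (kernel.ι (m' ≫ g))) t ≫ (m' ≫ g) = 0 := by
        have haux : pullback.fst (cokernel.π (kernel.ι (m' ≫ g))) t
            ≫ cokernel.π (kernel.ι (m' ≫ g))
            ≫ cokernel.desc (kernel.ι (m' ≫ g)) (m' ≫ g) (kernel.condition _) = 0 := by
          rw [← Category.assoc, pullback.condition, Category.assoc, ht, comp_zero]
        rw [hπq] at haux
        exact haux
      have h2 : pullback.fst (cokernel.π (kernel.ι (m' ≫ g))) t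
          ≫ cokernel.π (kernel.ι (m' ≫ g)) = 0 := by
        rw [← kernel.lift_ι (m' ≫ g) _ h1, Category.assoc, cokernel.condition, comp_zero]
      have h3 : pullback.snd (cokernel.π (kernel.ι (m' ≫ g))) t ≫ t = 0 := by
        rw [← pullback.condition, h2]
      have hepi : Epi (pullback.snd (cokernel.π (kernel.ι (m' ≫ g))) t) :=
        epi_of_isStrictEpi hsnd
      apply (cancel_epi (pullback.snd (cokernel.π (kernel.ι (m' ≫ g))) t)).mp
      rw [comp_zero]; exact h3
    have hkm : (kernel.ι (m' ≫ g) ≫ m') ≫ g = 0 := by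
      rw [Category.assoc]; exact kernel.condition _
    obtain ⟨u, hu⟩ := KernelFork.IsLimit.lift' hker (kernel.ι (m' ≫ g) ≫ m') hkm
    simp only [Fork.ι_ofι] at hu
    haveI : Mono (kernel.ι (m' ≫ g) ≫ m') := mono_comp _ _
    haveI hmu : Mono u := mono_of_mono_fac hu
    have hK : S.μ (kernel (m' ≫ g)) * (R.rk (kernel (m' ≫ g)) : ℚ)
        ≤ lam * (R.rk (kernel (m' ≫ g)) : ℚ) := by
      refine degle _ (fun h0 => ?_)
      have := hMsub u hmu h0
      rw [hMs] at this; exact this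
    have hQ'' : S.μ (cokernel (kernel.ι (m' ≫ g))) * (R.rk (cokernel (kernel.ι (m' ≫ g))) : ℚ)
        ≤ lam * (R.rk (cokernel (kernel.ι (m' ≫ g))) : ℚ) := by
      refine degle _ (fun h0 => ?_)
      have := hPsub _ hmq h0
      rw [hPs] at this; exact this
    have hrkQ2 : (R.rk Q : ℚ)
        = (R.rk (kernel (m' ≫ g)) : ℚ) + (R.rk (cokernel (kernel.ι (m' ≫ g))) : ℚ) := by
      exact_mod_cast congrArg (Nat.cast : ℕ → ℚ) (R.additive _ _ hsesQ)
    have hdegQ := S.deg_additive _ _ hsesQ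
    have hrkQpos := rkpos Q hQ0
    have h3 : lam * (R.rk Q : ℚ) = lam * (R.rk (kernel (m' ≫ g)) : ℚ)
        + lam * (R.rk (cokernel (kernel.ι (m' ≫ g))) : ℚ) := by rw [hrkQ2]; ring
    have key : S.μ Q * (R.rk Q : ℚ) ≤ lam * (R.rk Q : ℚ) := by
      rw [hdegQ, h3]; exact add_le_add hK hQ''
    rw [hμN]
    exact le_of_mul_le_mul_right key hrkQpos
  -- Case 3 : N and P semistable of slope lam
  · rintro ⟨⟨hN0, hNsub⟩, hNs⟩ ⟨⟨hP0, hPsub⟩, hPs⟩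
    by_cases hM0 : IsZero M
    · exact Or.inl hM0
    right
    have hrkM := rkpos M hM0
    have hμM : S.μ M = lam := by
      rw [hNs, hPs, hrk] at hdeg
      exact mul_right_cancel₀ hrkM.ne' (by linear_combination -hdeg)
    refine ⟨⟨hM0, fun Q m hm hQ0 => ?_⟩, hμM⟩
    haveI := hm
    haveI : Mono (m ≫ f) := mono_comp _ _
    rw [hμM, ← hNs]
    exact hNsub (m ≫ f) inferInstance hQ0


end SlopeFiltrations
end

section
/- Let C be an essentially small quasi-abelian category with a rank function rk and a slope function μ, let λ ∈ ℚ, and let f : M → N be a morphism between objects M and N that are both semistable of slope λ. Then each of Ker f, Im f, Coker f and Coim f is either zero or semistable of slope λ. -/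
open CategoryTheory CategoryTheory.Limits

universe v u

namespace SlopeFiltrations

variable {C : Type u} [Category.{v} C]

variable {C : Type u} [Category.{v} C]

section Helpers

variable [HasZeroMorphisms C]

lemma IsStrictMono.mono_s11 {A B : C} {g : A ⟶ B} (h : IsStrictMono g) : Mono g := by
  obtain ⟨Z, q, w, ⟨hl⟩⟩ := h
  exact mono_of_isLimit_fork hl

lemma IsStrictEpi.epi_s11 {A B : C} {g : A ⟶ B} (h : IsStrictEpi g) : Epi g := by
  obtain ⟨Z, q, w, ⟨hc⟩⟩ := h
  exact epi_of_isColimit_cofork hc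

lemma isStrictMono_kernel_ι [HasKernels C] {M N : C} (f : M ⟶ N) : IsStrictMono (kernel.ι f) :=
  ⟨N, f, kernel.condition f, ⟨kernelIsKernel f⟩⟩

lemma isStrictEpi_cokernel_π [HasCokernels C] {M N : C} (f : M ⟶ N) :
    IsStrictEpi (cokernel.π f) :=
  ⟨M, f, cokernel.condition f, ⟨cokernelIsCokernel f⟩⟩

/-- A strict mono is a kernel of its cokernel. -/
lemma IsStrictMono.isKernelOfCokernel [HasCokernels C] {A B : C} {g : A ⟶ B}
    (h : IsStrictMono g) : Nonempty (IsLimit (KernelFork.ofι g (cokernel.condition g))) := by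
  obtain ⟨Z, q, w, ⟨hl⟩⟩ := h
  have hm : Mono g := mono_of_isLimit_fork hl
  refine ⟨KernelFork.IsLimit.ofι g _ (fun {W'} t ht =>
      (KernelFork.IsLimit.lift' hl t (by
        rw [← cokernel.π_desc g q w, ← Category.assoc, ht, zero_comp])).1)
    (fun {W'} t ht => ?_) (fun {W'} t ht l hl' => ?_)⟩
  · simpa using (KernelFork.IsLimit.lift' hl t _).2
  · have h2 : (KernelFork.IsLimit.lift' hl t
        (by rw [← cokernel.π_desc g q w, ← Category.assoc, ht, zero_comp])).1 ≫ g = t := by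
      simpa using (KernelFork.IsLimit.lift' hl t _).2
    rw [← cancel_mono g, hl', h2]

/-- If `g` is a strict epi and `u` is a kernel of `g`, then `u, g` is short exact. -/
lemma ses_of_strictEpi_of_isKernel_s11 {A B Z : C} {g : B ⟶ Z} (hg : IsStrictEpi g)
    {u : A ⟶ B} (w : u ≫ g = 0) (hu : IsLimit (KernelFork.ofι u w)) :
    IsShortExactSeq u g := by
  obtain ⟨W, h, wh, ⟨hc⟩⟩ := hg
  have he : Epi g := epi_of_isColimit_cofork hc
  obtain ⟨h', hh'⟩ := KernelFork.IsLimit.lift' hu h wh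
  simp only [Fork.ι_ofι] at hh'
  refine ⟨w, ⟨hu⟩, ⟨CokernelCofork.IsColimit.ofπ g w
    (fun {Z'} t ht => (CokernelCofork.IsColimit.desc' hc t (by
      rw [← hh', Category.assoc, ht, comp_zero])).1)
    (fun {Z'} t ht => ?_) (fun {Z'} t ht m hm => ?_)⟩⟩
  · simpa using (CokernelCofork.IsColimit.desc' hc t _).2
  · have h2 : g ≫ (CokernelCofork.IsColimit.desc' hc t
        (by rw [← hh', Category.assoc, ht, comp_zero])).1 = t := by
      simpa using (CokernelCofork.IsColimit.desc' hc t _).2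
    rw [← cancel_epi g, hm, h2]

lemma isZero_of_epi_zero {A B : C} (e : A ⟶ B) (he : Epi e) (h : e = 0) : IsZero B := by
  rw [IsZero.iff_id_eq_zero, ← cancel_epi e, h, zero_comp, comp_zero]

/-- The induced map from a kernel of `g` into a pullback of `g` is a kernel of the
second projection. -/
lemma isKernel_pullback_snd {P X Q Z K : C} {fst : P ⟶ X} {snd : P ⟶ Q} {g : X ⟶ Z}
    {m : Q ⟶ Z} (hpb : IsPullback fst snd g m) {k : K ⟶ X} (w : k ≫ g = 0)
    (hk : IsLimit (KernelFork.ofι k w)) :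
    ∃ (u : K ⟶ P) (wu : u ≫ snd = 0), Nonempty (IsLimit (KernelFork.ofι u wu)) := by
  have hmk : Mono k := mono_of_isLimit_fork hk
  refine ⟨hpb.lift k 0 (by rw [w, zero_comp]), by simp, ?_⟩
  have hw : ∀ {T : C} (t : T ⟶ P), t ≫ snd = 0 → (t ≫ fst) ≫ g = 0 := fun {T} t ht => by
    rw [Category.assoc, hpb.w, ← Category.assoc, ht, zero_comp]
  refine ⟨KernelFork.IsLimit.ofι _ _ (fun {T} t ht =>
      (KernelFork.IsLimit.lift' hk (t ≫ fst) (hw t ht)).1)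
    (fun {T} t ht => ?_) (fun {T} t ht l hl => ?_)⟩
  · have h2 : (KernelFork.IsLimit.lift' hk (t ≫ fst) (hw t ht)).1 ≫ k = t ≫ fst := by
      simpa using (KernelFork.IsLimit.lift' hk (t ≫ fst) (hw t ht)).2
    apply hpb.hom_ext
    · rw [Category.assoc, hpb.lift_fst, h2]
    · rw [Category.assoc, hpb.lift_snd, comp_zero, ht]
  · have h2 : (KernelFork.IsLimit.lift' hk (t ≫ fst) (hw t ht)).1 ≫ k = t ≫ fst := by
      simpa using (KernelFork.IsLimit.lift' hk (t ≫ fst) (hw t ht)).2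
    rw [← cancel_mono k, h2, ← hl, Category.assoc, hpb.lift_fst]

end Helpers

section QAHelpers

set_option linter.unusedSectionVars false

variable [Preadditive C] [HasKernels C] [HasCokernels C] [IsQuasiAbelian C]
  [HasFiniteBiproducts C]

lemma isZero_of_mono_zero {A B : C} (m : A ⟶ B) (hm : Mono m) (h : m = 0) : IsZero A := by
  rw [IsZero.iff_id_eq_zero, ← cancel_mono m, h, zero_comp, comp_zero]

lemma mono_comparison {M N : C} (f : M ⟶ N) : Mono (Abelian.coimageImageComparison f) := by
  haveI : HasBinaryBiproducts C := hasBinaryBiproducts_of_finite_biproducts C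
  haveI : HasEqualizers C := Preadditive.hasEqualizers_of_hasKernels
  haveI : HasPullbacks C := hasPullbacks_of_hasBinaryProducts_of_hasEqualizers C
  have hfac : Abelian.coimage.π f ≫ Abelian.coimageImageComparison f ≫ Abelian.image.ι f = f :=
    Abelian.coimage_image_factorisation f
  have hg : Mono (Abelian.coimageImageComparison f ≫ Abelian.image.ι f) := by
    rw [Preadditive.mono_iff_cancel_zero]
    intro T t ht
    have hpb := IsPullback.of_hasPullback (Abelian.coimage.π f) t
    have hsnd : IsStrictEpi (pullback.snd (Abelian.coimage.π f) t) :=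
      IsQuasiAbelian.strictEpi_of_pullback hpb (isStrictEpi_cokernel_π _)
    have hfac' : pullback.fst (Abelian.coimage.π f) t ≫ f
        = pullback.fst (Abelian.coimage.π f) t ≫ Abelian.coimage.π f ≫
          Abelian.coimageImageComparison f ≫ Abelian.image.ι f := by rw [hfac]
    have h1 : pullback.fst (Abelian.coimage.π f) t ≫ f = 0 := by
      rw [hfac', ← Category.assoc, hpb.w, Category.assoc, ht, comp_zero]
    have h2 : pullback.fst (Abelian.coimage.π f) t ≫ Abelian.coimage.π f = 0 := by
      rw [← kernel.lift_ι f _ h1, Category.assoc]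
      show _ ≫ kernel.ι f ≫ cokernel.π (kernel.ι f) = 0
      rw [cokernel.condition, comp_zero]
    rw [hpb.w] at h2
    haveI := hsnd.epi_s11
    exact zero_of_epi_comp _ h2
  exact mono_of_mono _ (Abelian.image.ι f)

lemma epi_comparison {M N : C} (f : M ⟶ N) : Epi (Abelian.coimageImageComparison f) := by
  haveI : HasBinaryBiproducts C := hasBinaryBiproducts_of_finite_biproducts C
  haveI : HasCoequalizers C := Preadditive.hasCoequalizers_of_hasCokernels
  haveI : HasPushouts C := hasPushouts_of_hasBinaryCoproducts_of_hasCoequalizers C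
  have hfac : Abelian.coimage.π f ≫ Abelian.coimageImageComparison f ≫ Abelian.image.ι f = f :=
    Abelian.coimage_image_factorisation f
  have hh : Epi (Abelian.coimage.π f ≫ Abelian.coimageImageComparison f) := by
    rw [Preadditive.epi_iff_cancel_zero]
    intro T t ht
    have hpo := IsPushout.of_hasPushout (Abelian.image.ι f) t
    have hinr : IsStrictMono (pushout.inr (Abelian.image.ι f) t) :=
      IsQuasiAbelian.strictMono_of_pushout hpo (isStrictMono_kernel_ι _)
    have hfac' : f ≫ pushout.inl (Abelian.image.ι f) t
        = (Abelian.coimage.π f ≫ Abelian.coimageImageComparison f ≫ Abelian.image.ι f) ≫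
          pushout.inl (Abelian.image.ι f) t := by rw [hfac]
    have h1 : f ≫ pushout.inl (Abelian.image.ι f) t = 0 := by
      rw [hfac', Category.assoc, Category.assoc, hpo.w, ← Category.assoc, ← Category.assoc,
        ht, zero_comp]
    have h2 : Abelian.image.ι f ≫ pushout.inl (Abelian.image.ι f) t = 0 := by
      rw [← cokernel.π_desc f _ h1, ← Category.assoc]
      show (kernel.ι (cokernel.π f) ≫ cokernel.π f) ≫ _ = 0
      rw [kernel.condition, zero_comp]
    rw [hpo.w] at h2
    haveI := hinr.mono_s11
    exact zero_of_comp_mono _ h2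
  exact epi_of_epi (Abelian.coimage.π f) _

lemma isZero_coimage_iff {M N : C} (f : M ⟶ N) :
    IsZero (Abelian.coimage f) ↔ IsZero (Abelian.image f) := by
  constructor
  · intro h
    exact isZero_of_epi_zero _ (epi_comparison f) (h.eq_of_src _ _)
  · intro h
    exact isZero_of_mono_zero _ (mono_comparison f) (h.eq_of_tgt _ _)

end QAHelpers

lemma aux_le {muP muK muQ lam rP rK rQ : ℚ} (hr : rP = rK + rQ)
    (hdeg : muP * rP = muK * rK + muQ * rQ) (hK : muK * rK = lam * rK)
    (hmuP : muP ≤ lam) (hPp : 0 ≤ rP) (hQp : 0 < rQ) : muQ ≤ lam := by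
  have e : lam * rP = lam * rK + lam * rQ := by rw [hr]; ring
  have h2 : muP * rP ≤ lam * rP := mul_le_mul_of_nonneg_right hmuP hPp
  have h1 : muQ * rQ ≤ lam * rQ := by linarith
  nlinarith [h1, hQp]

set_option maxHeartbeats 1000000 in
/-- Let `f : M ⟶ N` be a morphism between objects that are semistable of slope `lam`. Then
`Ker f`, `Im f = Ker (coker f)`, `Coker f` and `Coim f = Coker (ker f)` are each either zero
or semistable of slope `lam`. -/
theorem ker_im_coker_coim_semistable
    [Preadditive C] [HasFiniteBiproducts C] [HasKernels C] [HasCokernels C]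
    [IsQuasiAbelian C] [EssentiallySmall.{v} C]
    (R : RankFunction C) (S : SlopeFunction C R) (lam : ℚ)
    {M N : C} (f : M ⟶ N)
    (hM : SemistableOfSlope S.μ lam M) (hN : SemistableOfSlope S.μ lam N) :
    (IsZero (kernel f) ∨ SemistableOfSlope S.μ lam (kernel f)) ∧
    (IsZero (Abelian.image f) ∨ SemistableOfSlope S.μ lam (Abelian.image f)) ∧
    (IsZero (cokernel f) ∨ SemistableOfSlope S.μ lam (cokernel f)) ∧
    (IsZero (Abelian.coimage f) ∨ SemistableOfSlope S.μ lam (Abelian.coimage f)) := by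

  haveI : HasBinaryBiproducts C := hasBinaryBiproducts_of_finite_biproducts C
  haveI : HasEqualizers C := Preadditive.hasEqualizers_of_hasKernels
  haveI : HasPullbacks C := hasPullbacks_of_hasBinaryProducts_of_hasEqualizers C
  obtain ⟨⟨hM0, hMss⟩, hMμ⟩ := hM
  obtain ⟨⟨hN0, hNss⟩, hNμ⟩ := hN
  have rkpos : ∀ X : C, ¬ IsZero X → 0 < (R.rk X : ℚ) := fun X hX => by
    have : R.rk X ≠ 0 := fun h => hX ((R.rk_zero_iff X).1 h)
    exact_mod_cast Nat.pos_of_ne_zero this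
  have rkzero : ∀ X : C, IsZero X → (R.rk X : ℚ) = 0 := fun X hX => by
    exact_mod_cast (R.rk_zero_iff X).2 hX
  -- short exact sequences ker f → M → coim f   and   im f → N → coker f
  obtain ⟨hk1⟩ := (isStrictMono_kernel_ι f).isKernelOfCokernel
  have SES1 : IsShortExactSeq (kernel.ι f) (Abelian.coimage.π f) :=
    ses_of_strictEpi_of_isKernel_s11 (isStrictEpi_cokernel_π _) (cokernel.condition (kernel.ι f)) hk1
  have SES2 : IsShortExactSeq (Abelian.image.ι f) (cokernel.π f) :=
    ses_of_strictEpi_of_isKernel_s11 (isStrictEpi_cokernel_π f) (kernel.condition (cokernel.π f))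
      (kernelIsKernel _)
  have rk1 : (R.rk M : ℚ) = R.rk (kernel f) + R.rk (Abelian.coimage f) := by
    exact_mod_cast R.additive _ _ SES1
  have deg1 := S.deg_additive _ _ SES1
  have rk2 : (R.rk N : ℚ) = R.rk (Abelian.image f) + R.rk (cokernel f) := by
    exact_mod_cast R.additive _ _ SES2
  have deg2 := S.deg_additive _ _ SES2
  have deg1' : lam * ((R.rk (kernel f) : ℚ) + R.rk (Abelian.coimage f))
      = S.μ (kernel f) * R.rk (kernel f)
        + S.μ (Abelian.coimage f) * R.rk (Abelian.coimage f) := by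
    rw [← rk1, ← hMμ]; exact deg1
  have deg2' : lam * ((R.rk (Abelian.image f) : ℚ) + R.rk (cokernel f))
      = S.μ (Abelian.image f) * R.rk (Abelian.image f)
        + S.μ (cokernel f) * R.rk (cokernel f) := by
    rw [← rk2, ← hNμ]; exact deg2
  -- deg of kernel is bounded by lam * rk
  have hκle : S.μ (kernel f) * R.rk (kernel f) ≤ lam * R.rk (kernel f) := by
    by_cases hz : IsZero (kernel f)
    · rw [rkzero _ hz, mul_zero, mul_zero]
    · have h := (hMss (kernel.ι f) inferInstance hz).trans_eq hMμ
      have := (rkpos _ hz).le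
      nlinarith
  -- the key squeeze
  have key1 : S.μ (Abelian.coimage f) * R.rk (Abelian.coimage f)
      = lam * R.rk (Abelian.coimage f) := by
    by_cases hz : IsZero (Abelian.image f)
    · rw [rkzero _ ((isZero_coimage_iff f).2 hz), mul_zero, mul_zero]
    · have hz' : ¬ IsZero (Abelian.coimage f) := fun h => hz ((isZero_coimage_iff f).1 h)
      have h1 : S.μ (Abelian.coimage f) ≤ S.μ (Abelian.image f) :=
        S.le_of_mono_epi _ (mono_comparison f) (epi_comparison f) hz' hz
      have h2 : S.μ (Abelian.image f) ≤ lam :=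
        (hNss (Abelian.image.ι f) inferInstance hz).trans_eq hNμ
      have hp := rkpos _ hz'
      have h3 : lam ≤ S.μ (Abelian.coimage f) := by nlinarith [deg1', hκle, hp]
      have : S.μ (Abelian.coimage f) = lam := le_antisymm (h1.trans h2) h3
      rw [this]
  have key2 : S.μ (Abelian.image f) * R.rk (Abelian.image f)
      = lam * R.rk (Abelian.image f) := by
    by_cases hz : IsZero (Abelian.image f)
    · rw [rkzero _ hz, mul_zero, mul_zero]
    · have hz' : ¬ IsZero (Abelian.coimage f) := fun h => hz ((isZero_coimage_iff f).1 h)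
      have h1 : S.μ (Abelian.coimage f) ≤ S.μ (Abelian.image f) :=
        S.le_of_mono_epi _ (mono_comparison f) (epi_comparison f) hz' hz
      have h2 : S.μ (Abelian.image f) ≤ lam :=
        (hNss (Abelian.image.ι f) inferInstance hz).trans_eq hNμ
      have hp := rkpos _ hz'
      have h3 : lam ≤ S.μ (Abelian.coimage f) := by nlinarith [deg1', hκle, hp]
      have : S.μ (Abelian.image f) = lam := le_antisymm h2 (h3.trans h1)
      rw [this]
  have hdegκ : S.μ (kernel f) * R.rk (kernel f) = lam * R.rk (kernel f) := by
    linear_combination -deg1' - key1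
  have hdegcok : S.μ (cokernel f) * R.rk (cokernel f) = lam * R.rk (cokernel f) := by
    linear_combination -deg2' - key2
  refine ⟨?_, ?_, ?_, ?_⟩
  -- kernel
  · by_cases hz : IsZero (kernel f)
    · exact Or.inl hz
    · have hμκ : S.μ (kernel f) = lam :=
        mul_right_cancel₀ (ne_of_gt (rkpos _ hz)) hdegκ
      refine Or.inr ⟨⟨hz, fun Q m hm hQ => ?_⟩, hμκ⟩
      haveI := hm
      have : Mono (m ≫ kernel.ι f) := mono_comp _ _
      exact ((hMss (m ≫ kernel.ι f) this hQ).trans_eq hMμ).trans_eq hμκ.symm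
  -- image
  · by_cases hz : IsZero (Abelian.image f)
    · exact Or.inl hz
    · have hμim : S.μ (Abelian.image f) = lam :=
        mul_right_cancel₀ (ne_of_gt (rkpos _ hz)) key2
      refine Or.inr ⟨⟨hz, fun Q m hm hQ => ?_⟩, hμim⟩
      haveI := hm
      have : Mono (m ≫ Abelian.image.ι f) := mono_comp _ _
      exact ((hNss (m ≫ Abelian.image.ι f) this hQ).trans_eq hNμ).trans_eq hμim.symm
  -- cokernel
  · by_cases hz : IsZero (cokernel f)
    · exact Or.inl hz
    · have hμcok : S.μ (cokernel f) = lam :=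
        mul_right_cancel₀ (ne_of_gt (rkpos _ hz)) hdegcok
      refine Or.inr ⟨⟨hz, fun Q m hm hQ => ?_⟩, hμcok⟩
      haveI := hm
      have hpb := IsPullback.of_hasPullback (cokernel.π f) m
      have hsnd := IsQuasiAbelian.strictEpi_of_pullback hpb (isStrictEpi_cokernel_π f)
      obtain ⟨u, wu, ⟨hu⟩⟩ :=
        isKernel_pullback_snd hpb (kernel.condition (cokernel.π f)) (kernelIsKernel _)
      have SES3 := ses_of_strictEpi_of_isKernel_s11 hsnd wu hu
      have rk3 : (R.rk (pullback (cokernel.π f) m) : ℚ)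
          = R.rk (Abelian.image f) + R.rk Q := by exact_mod_cast R.additive _ _ SES3
      have deg3 := S.deg_additive _ _ SES3
      have hP0 : ¬ IsZero (pullback (cokernel.π f) m) := fun h =>
        hQ (isZero_of_epi_zero _ hsnd.epi_s11 (h.eq_of_src _ _))
      have hμP : S.μ (pullback (cokernel.π f) m) ≤ lam :=
        (hNss (pullback.fst (cokernel.π f) m) inferInstance hP0).trans_eq hNμ
      have deg3' : S.μ (pullback (cokernel.π f) m) * (R.rk (pullback (cokernel.π f) m) : ℚ)
          = S.μ (Abelian.image f) * R.rk (Abelian.image f) + S.μ Q * R.rk Q := deg3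
      have hQp := rkpos _ hQ
      have hPp := (rkpos _ hP0).le
      rw [hμcok]
      exact aux_le rk3 deg3' key2 hμP hPp hQp
  -- coimage
  · by_cases hz : IsZero (Abelian.coimage f)
    · exact Or.inl hz
    · have hμcoim : S.μ (Abelian.coimage f) = lam :=
        mul_right_cancel₀ (ne_of_gt (rkpos _ hz)) key1
      refine Or.inr ⟨⟨hz, fun Q m hm hQ => ?_⟩, hμcoim⟩
      haveI := hm
      have hpb := IsPullback.of_hasPullback (Abelian.coimage.π f) m
      have hsnd := IsQuasiAbelian.strictEpi_of_pullback hpb (isStrictEpi_cokernel_π _)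
      obtain ⟨u, wu, ⟨hu⟩⟩ :=
        isKernel_pullback_snd hpb (cokernel.condition (kernel.ι f)) hk1
      have SES4 := ses_of_strictEpi_of_isKernel_s11 hsnd wu hu
      have rk4 : (R.rk (pullback (Abelian.coimage.π f) m) : ℚ)
          = R.rk (kernel f) + R.rk Q := by exact_mod_cast R.additive _ _ SES4
      have deg4 := S.deg_additive _ _ SES4
      have hP0 : ¬ IsZero (pullback (Abelian.coimage.π f) m) := fun h =>
        hQ (isZero_of_epi_zero _ hsnd.epi_s11 (h.eq_of_src _ _))
      have hμP : S.μ (pullback (Abelian.coimage.π f) m) ≤ lam :=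
        (hMss (pullback.fst (Abelian.coimage.π f) m) inferInstance hP0).trans_eq hMμ
      have hQp := rkpos _ hQ
      have hPp := (rkpos _ hP0).le
      rw [hμcoim]
      exact aux_le rk4 deg4 hdegκ hμP hPp hQp


end SlopeFiltrations
end
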